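/- arXiv:2505.16878 — 3 statements merged into one kernel-verified Lean document; each statement's English description precedes it below -/
import Mathlib

section
/- With f̂_j = G f_j and λ̂_j = ∫_Ω g(x) w_j(x) dx, concavity of the logarithm and Jensen's inequality give l(f, λ) − l(f̂, λ̂) ≥ ∫_Ω g(x) Σ_{j=1}^m w_j(x) log( (λ̂_j (N G f_j)(x)) / (λ_j (N f_j)(x)) ) dx. -/
open MeasureTheory Filter

noncomputable section

/-- `Euc d` is the Euclidean space `ℝ^d`. -/
abbrev Euc (d : ℕ) : Type := EuclideanSpace ℝ (Fin d)

variable {d m : ℕ}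

/-- The nonlinear smoothing operator `(N f)(x) = exp (∫_Ω K_H(x - u) log f(u) du)`. -/
noncomputable def NOp (Ω : Set (Euc d)) (KH : Euc d → ℝ) (f : Euc d → ℝ) (x : Euc d) : ℝ :=
  Real.exp (∫ u in Ω, KH (x - u) * Real.log (f u))

/-- The linear smoothing operator `(S f)(x) = ∫_Ω K_H(x - u) f(u) du`. -/
noncomputable def SOp (Ω : Set (Euc d)) (KH : Euc d → ℝ) (f : Euc d → ℝ) (x : Euc d) : ℝ :=
  ∫ u in Ω, KH (x - u) * f u

/-- The smoothed mixture `(M_λ N f)(x) = ∑ j, λ_j (N f_j)(x)`. -/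
noncomputable def MOp (Ω : Set (Euc d)) (KH : Euc d → ℝ) (lam : Fin m → ℝ)
    (f : Fin m → Euc d → ℝ) (x : Euc d) : ℝ :=
  ∑ j, lam j * NOp Ω KH (f j) x

/-- The smoothed negative log-likelihood functional
`l(f, λ) = ∫_Ω g(x) log (g(x) / (M_λ N f)(x)) dx`. -/
noncomputable def ell (Ω : Set (Euc d)) (KH g : Euc d → ℝ) (lam : Fin m → ℝ)
    (f : Fin m → Euc d → ℝ) : ℝ :=
  ∫ x in Ω, g x * Real.log (g x / MOp Ω KH lam f x)

/-- The weight functions `w_j(x) = λ_j (N f_j)(x) / (M_λ N f)(x)`. -/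
noncomputable def wFun (Ω : Set (Euc d)) (KH : Euc d → ℝ) (lam : Fin m → ℝ)
    (f : Fin m → Euc d → ℝ) (j : Fin m) (x : Euc d) : ℝ :=
  lam j * NOp Ω KH (f j) x / MOp Ω KH lam f x

/-- The iteration operator
`(G f_j)(x) = α_j ∫_Ω K_H(x - u) g(u) (N f_j)(u) / (M_λ N f)(u) du`. -/
noncomputable def GOp (Ω : Set (Euc d)) (KH g : Euc d → ℝ) (lam : Fin m → ℝ)
    (f : Fin m → Euc d → ℝ) (α : Fin m → ℝ) (j : Fin m) (x : Euc d) : ℝ :=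
  α j * ∫ u in Ω, KH (x - u) * g u * NOp Ω KH (f j) u / MOp Ω KH lam f u

/-- Kullback–Leibler distance between nonnegative functions on `Ω`:
`D(a | b) = ∫_Ω (a log (a / b) + b - a)`. -/
noncomputable def Dkl (Ω : Set (Euc d)) (a b : Euc d → ℝ) : ℝ :=
  ∫ x in Ω, (a x * Real.log (a x / b x) + b x - a x)

/-!
At each point `x` the weights `w_j(x) = a_j / ∑ a` with `a_j = λ_j (N f_j)(x)` form a probability
vector, so concavity of `log` (Jensen) bounds `∑ w_j log (b_j / a_j)` with `b_j = λ̂_j (N G f_j)(x)`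
by `log (∑ b / ∑ a)`, which is `log (M_λ̂ N f̂)(x) - log (M_λ N f)(x)`. Multiplying by `g(x) ≥ 0`
turns this into the difference of the integrands of `l(f, λ)` and `l(f̂, λ̂)`; integrating gives
the claim. The only further input is `λ̂_j > 0`, which holds because `w_j > 0` and `∫_Ω g = 1`.
-/

open Real

theorem sum_mul_log_div_le_log_sum_sub_log_sum {ι : Type*} (s : Finset ι) {a b : ι → ℝ}
    (ha : ∀ i ∈ s, 0 < a i) (hb : ∀ i ∈ s, 0 < b i) :
    ∑ i ∈ s, (a i / ∑ k ∈ s, a k) * log (b i / a i) ≤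
      log (∑ i ∈ s, b i) - log (∑ i ∈ s, a i) := by
  rcases s.eq_empty_or_nonempty with rfl | hs
  · simp
  have hA : 0 < ∑ k ∈ s, a k := Finset.sum_pos ha hs
  have hjensen := strictConcaveOn_log_Ioi.concaveOn.le_map_sum
    (w := fun i => a i / ∑ k ∈ s, a k) (p := fun i => b i / a i)
    (fun i hi => (div_pos (ha i hi) hA).le)
    (by rw [← Finset.sum_div, div_self hA.ne'])
    (fun i hi => Set.mem_Ioi.2 (div_pos (hb i hi) (ha i hi)))
  have hmean : ∑ i ∈ s, (a i / ∑ k ∈ s, a k) * (b i / a i) = (∑ i ∈ s, b i) / ∑ k ∈ s, a k := by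
    rw [Finset.sum_div]
    refine Finset.sum_congr rfl fun i hi => ?_
    field_simp [(ha i hi).ne']
  simp only [smul_eq_mul] at hjensen
  rwa [hmean, log_div (Finset.sum_pos hb hs).ne' hA.ne'] at hjensen

theorem mul_sum_mul_log_div_le_mul_log_div_sub {ι : Type*} (s : Finset ι) {a b : ι → ℝ}
    (ha : ∀ i ∈ s, 0 < a i) (hb : ∀ i ∈ s, 0 < b i) {c : ℝ} (hc : 0 ≤ c) :
    c * ∑ i ∈ s, (a i / ∑ k ∈ s, a k) * log (b i / a i) ≤
      c * log (c / ∑ i ∈ s, a i) - c * log (c / ∑ i ∈ s, b i) := by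
  rcases s.eq_empty_or_nonempty with rfl | hs
  · simp
  rcases hc.eq_or_lt with rfl | hc
  · simp
  rw [log_div hc.ne' (Finset.sum_pos ha hs).ne', log_div hc.ne' (Finset.sum_pos hb hs).ne']
  linarith [mul_le_mul_of_nonneg_left (sum_mul_log_div_le_log_sum_sub_log_sum s ha hb) hc.le]

theorem MeasureTheory.integral_mul_pos_of_integral_pos {α : Type*} [MeasurableSpace α]
    {μ : Measure α} {f w : α → ℝ} (hf : 0 ≤ f) (hf_pos : 0 < ∫ x, f x ∂μ) (hw : ∀ x, 0 < w x)
    (hfw : Integrable (fun x => f x * w x) μ) : 0 < ∫ x, f x * w x ∂μ := by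
  have hsupp : Function.support (fun x => f x * w x) = Function.support f :=
    Function.support_mul_of_ne_zero_right f fun x => (hw x).ne'
  rw [integral_pos_iff_support_of_nonneg hf (Integrable.of_integral_ne_zero hf_pos.ne')] at hf_pos
  rwa [integral_pos_iff_support_of_nonneg (fun x => mul_nonneg (hf x) (hw x).le) hfw, hsupp]

theorem wFun_pos (Ω : Set (Euc d)) (KH : Euc d → ℝ) {lam : Fin m → ℝ} (hlam : ∀ j, 0 < lam j)
    (f : Fin m → Euc d → ℝ) (j : Fin m) (x : Euc d) : 0 < wFun Ω KH lam f j x := by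
  have hterm : ∀ i, 0 < lam i * NOp Ω KH (f i) x := fun i => mul_pos (hlam i) (exp_pos _)
  exact div_pos (hterm j) <| (hterm j).trans_le <|
    Finset.single_le_sum (fun i _ => (hterm i).le) (Finset.mem_univ j)

theorem jensen_lower_bound_general
    (Ω : Set (Euc d)) (KH : Euc d → ℝ)
    (g : Euc d → ℝ) (hgnn : ∀ x, 0 ≤ g x) (hgdens : ∫ x in Ω, g x = 1)
    (lam : Fin m → ℝ) (hlampos : ∀ j, 0 < lam j)
    (f : Fin m → Euc d → ℝ) (α : Fin m → ℝ) (hatlam : Fin m → ℝ)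
    (hhatlam : ∀ j, hatlam j = ∫ x in Ω, g x * wFun Ω KH lam f j x)
    (hwint : ∀ j, IntegrableOn (fun x => g x * wFun Ω KH lam f j x) Ω)
    (hI₁ : IntegrableOn (fun x => g x * Real.log (g x / MOp Ω KH lam f x)) Ω)
    (hI₂ : IntegrableOn
      (fun x => g x * Real.log (g x / MOp Ω KH hatlam (fun j => GOp Ω KH g lam f α j) x)) Ω)
    (hI₃ : IntegrableOn (fun x => g x * ∑ j, wFun Ω KH lam f j x *
      Real.log (hatlam j * NOp Ω KH (GOp Ω KH g lam f α j) x /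
        (lam j * NOp Ω KH (f j) x))) Ω) :
    ell Ω KH g lam f - ell Ω KH g hatlam (fun j => GOp Ω KH g lam f α j) ≥
      ∫ x in Ω, g x * ∑ j, wFun Ω KH lam f j x *
        Real.log (hatlam j * NOp Ω KH (GOp Ω KH g lam f α j) x /
          (lam j * NOp Ω KH (f j) x)) := by
  have hhatpos : ∀ j, 0 < hatlam j := fun j => hhatlam j ▸
    integral_mul_pos_of_integral_pos hgnn (hgdens ▸ one_pos) (wFun_pos Ω KH hlampos f j) (hwint j)
  -- `wFun` and `MOp` unfold to `a j / ∑ a` and `∑ a`, so this matches the integrands up to defeq.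
  have hpointwise := fun x => mul_sum_mul_log_div_le_mul_log_div_sub Finset.univ
    (a := fun j => lam j * NOp Ω KH (f j) x)
    (b := fun j => hatlam j * NOp Ω KH (GOp Ω KH g lam f α j) x)
    (fun j _ => mul_pos (hlampos j) (exp_pos _)) (fun j _ => mul_pos (hhatpos j) (exp_pos _))
    (hgnn x)
  rw [ge_iff_le, ell, ell, ← integral_sub hI₁ hI₂]
  exact setIntegral_mono hI₃ (hI₁.sub hI₂) hpointwise

/-- concavity of the logarithm and Jensen's inequality give
`l(f, λ) − l(f̂, λ̂) ≥ ∫_Ω g ∑ j, w_j log( λ̂_j (N G f_j) / (λ_j (N f_j)) )`. -/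
theorem jensen_lower_bound
    (Ω : Set (Euc d)) (hΩc : IsCompact Ω) (hΩm : MeasurableSet Ω)
    (KH : Euc d → ℝ) (hKmeas : Measurable KH) (hKnn : ∀ u, 0 ≤ KH u)
    (hKint : ∫ u, KH u = 1)
    (g : Euc d → ℝ) (hgmeas : Measurable g) (hgnn : ∀ x, 0 ≤ g x)
    (hgdens : ∫ x in Ω, g x = 1)
    (lam : Fin m → ℝ) (hlampos : ∀ j, 0 < lam j) (hlamsum : ∑ j, lam j = 1)
    (f : Fin m → Euc d → ℝ) (hfmeas : ∀ j, Measurable (f j))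
    (hfpos : ∀ j x, 0 < f j x) (hfdens : ∀ j, ∫ x in Ω, f j x = 1)
    (hflog : ∀ j, IntegrableOn (fun u => Real.log (f j u)) Ω)
    (α : Fin m → ℝ) (hαpos : ∀ j, 0 < α j)
    (hGnorm : ∀ j, ∫ x in Ω, GOp Ω KH g lam f α j x = 1)
    (hGlog : ∀ j, IntegrableOn (fun u => Real.log (GOp Ω KH g lam f α j u)) Ω)
    (hatlam : Fin m → ℝ)
    (hhatlam : ∀ j, hatlam j = ∫ x in Ω, g x * wFun Ω KH lam f j x)
    (hwint : ∀ j, IntegrableOn (fun x => g x * wFun Ω KH lam f j x) Ω)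
    (hI₁ : IntegrableOn (fun x => g x * Real.log (g x / MOp Ω KH lam f x)) Ω)
    (hI₂ : IntegrableOn
      (fun x => g x * Real.log (g x / MOp Ω KH hatlam (fun j => GOp Ω KH g lam f α j) x)) Ω)
    (hI₃ : IntegrableOn (fun x => g x * ∑ j, wFun Ω KH lam f j x *
      Real.log (hatlam j * NOp Ω KH (GOp Ω KH g lam f α j) x /
        (lam j * NOp Ω KH (f j) x))) Ω) :
    ell Ω KH g lam f - ell Ω KH g hatlam (fun j => GOp Ω KH g lam f α j) ≥
      ∫ x in Ω, g x * ∑ j, wFun Ω KH lam f j x *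
        Real.log (hatlam j * NOp Ω KH (GOp Ω KH g lam f α j) x /
          (lam j * NOp Ω KH (f j) x)) :=
  jensen_lower_bound_general Ω KH g hgnn hgdens lam hlampos f α hatlam hhatlam hwint hI₁ hI₂ hI₃
end
end

section
/- Suppose the rescaled kernel is Lipschitz on Ω, i.e., there exists L > 0 with |K_H(x) − K_H(y)| ≤ L‖x − y‖ for all x, y, and suppose (M_λ N f)(u) ≥ M > 0 and (N f_j)(u) ≤ A for all u ∈ Ω. Then the updated density G f_j is Lipschitz with constant independent of f: |(G f_j)(x) − (G f_j)(y)| ≤ (α_j L A / M) ‖x − y‖ for all x, y ∈ Ω. -/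
open MeasureTheory Filter

noncomputable section

variable {d m : ℕ}

/-- if `K_H` is `L`-Lipschitz, `(M_λ N f)(u) ≥ M > 0` and `(N f_j)(u) ≤ A`
on `Ω`, then `|(G f_j)(x) − (G f_j)(y)| ≤ (α_j L A / M) ‖x − y‖` for all `x, y ∈ Ω`. -/
theorem updated_density_lipschitz
    (Ω : Set (Euc d)) (hΩc : IsCompact Ω) (hΩm : MeasurableSet Ω)
    (KH : Euc d → ℝ) (hKmeas : Measurable KH) (hKnn : ∀ u, 0 ≤ KH u)
    (L : ℝ) (hL : 0 < L) (hLip : ∀ x y : Euc d, |KH x - KH y| ≤ L * ‖x - y‖)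
    (g : Euc d → ℝ) (hgmeas : Measurable g) (hgnn : ∀ x, 0 ≤ g x)
    (hgdens : ∫ x in Ω, g x = 1)
    (lam : Fin m → ℝ) (hlampos : ∀ j, 0 < lam j) (hlamsum : ∑ j, lam j = 1)
    (f : Fin m → Euc d → ℝ) (hfmeas : ∀ j, Measurable (f j))
    (hfpos : ∀ j x, 0 < f j x) (hfdens : ∀ j, ∫ x in Ω, f j x = 1)
    (hflog : ∀ j, IntegrableOn (fun u => Real.log (f j u)) Ω)
    (α : Fin m → ℝ) (hαpos : ∀ j, 0 < α j)
    (hGnorm : ∀ j, ∫ x in Ω, GOp Ω KH g lam f α j x = 1)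
    (M : ℝ) (hM : 0 < M) (hMlow : ∀ u ∈ Ω, M ≤ MOp Ω KH lam f u)
    (A : ℝ) (hNup : ∀ j, ∀ u ∈ Ω, NOp Ω KH (f j) u ≤ A)
    (hGint : ∀ j, ∀ x ∈ Ω, IntegrableOn
      (fun u => KH (x - u) * g u * NOp Ω KH (f j) u / MOp Ω KH lam f u) Ω) :
    ∀ j, ∀ x ∈ Ω, ∀ y ∈ Ω,
      |GOp Ω KH g lam f α j x - GOp Ω KH g lam f α j y| ≤ α j * L * A / M * ‖x - y‖ := by
  intro j x hx y hy
  have hgint : IntegrableOn g Ω := by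
    by_contra h
    rw [MeasureTheory.integral_undef h] at hgdens
    exact one_ne_zero hgdens.symm
  have hA0 : 0 ≤ A := le_trans (le_of_lt (Real.exp_pos _)) (hNup j x hx)
  set C : ℝ := L * ‖x - y‖ * A / M with hC
  have hC0 : 0 ≤ C := by positivity
  have key : ∀ u ∈ Ω,
      ‖KH (x - u) * g u * NOp Ω KH (f j) u / MOp Ω KH lam f u
        - KH (y - u) * g u * NOp Ω KH (f j) u / MOp Ω KH lam f u‖ ≤ C * g u := by
    intro u hu
    have hMu : M ≤ MOp Ω KH lam f u := hMlow u hu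
    have hMu0 : (0:ℝ) < MOp Ω KH lam f u := lt_of_lt_of_le hM hMu
    have hN : NOp Ω KH (f j) u ≤ A := hNup j u hu
    have hN0 : (0:ℝ) < NOp Ω KH (f j) u := Real.exp_pos _
    have hg0 := hgnn u
    have h1 : KH (x - u) * g u * NOp Ω KH (f j) u / MOp Ω KH lam f u
        - KH (y - u) * g u * NOp Ω KH (f j) u / MOp Ω KH lam f u
        = (KH (x - u) - KH (y - u)) * (g u * NOp Ω KH (f j) u / MOp Ω KH lam f u) := by
      field_simp
    rw [Real.norm_eq_abs, h1, abs_mul]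
    have hK := hLip (x - u) (y - u)
    have hxy : x - u - (y - u) = x - y := by abel
    rw [hxy] at hK
    have hfrac : |g u * NOp Ω KH (f j) u / MOp Ω KH lam f u| ≤ A / M * g u := by
      rw [abs_of_nonneg (by positivity)]
      rw [div_le_iff₀ hMu0]
      calc g u * NOp Ω KH (f j) u ≤ g u * A := by nlinarith
        _ ≤ A / M * g u * MOp Ω KH lam f u := by
            rw [div_mul_eq_mul_div, div_mul_eq_mul_div, le_div_iff₀ hM]
            nlinarith [mul_nonneg (mul_nonneg hA0 hg0) (sub_nonneg.2 hMu)]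
    calc |KH (x - u) - KH (y - u)| * |g u * NOp Ω KH (f j) u / MOp Ω KH lam f u|
        ≤ (L * ‖x - y‖) * (A / M * g u) :=
          mul_le_mul hK hfrac (abs_nonneg _) (by positivity)
      _ = C * g u := by rw [hC]; ring
  have hix := hGint j x hx
  have hiy := hGint j y hy
  have hdiff : GOp Ω KH g lam f α j x - GOp Ω KH g lam f α j y
      = α j * ∫ u in Ω,
        (KH (x - u) * g u * NOp Ω KH (f j) u / MOp Ω KH lam f u
          - KH (y - u) * g u * NOp Ω KH (f j) u / MOp Ω KH lam f u) := by
    rw [MeasureTheory.integral_sub hix hiy]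
    unfold GOp
    ring
  rw [hdiff, abs_mul, abs_of_pos (hαpos j)]
  have hbound : ‖∫ u in Ω,
      (KH (x - u) * g u * NOp Ω KH (f j) u / MOp Ω KH lam f u
        - KH (y - u) * g u * NOp Ω KH (f j) u / MOp Ω KH lam f u)‖
      ≤ ∫ u in Ω, C * g u := by
    apply MeasureTheory.norm_integral_le_of_norm_le (hgint.const_mul C)
    exact (MeasureTheory.ae_restrict_iff' hΩm).2 (Filter.Eventually.of_forall key)
  have hval : ∫ u in Ω, C * g u = C := by
    rw [MeasureTheory.integral_const_mul, hgdens, mul_one]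
  rw [hval] at hbound
  rw [Real.norm_eq_abs] at hbound
  calc α j * |∫ u in Ω,
      (KH (x - u) * g u * NOp Ω KH (f j) u / MOp Ω KH lam f u
        - KH (y - u) * g u * NOp Ω KH (f j) u / MOp Ω KH lam f u)|
      ≤ α j * C := by nlinarith [(hαpos j).le, abs_nonneg (∫ u in Ω,
        (KH (x - u) * g u * NOp Ω KH (f j) u / MOp Ω KH lam f u
          - KH (y - u) * g u * NOp Ω KH (f j) u / MOp Ω KH lam f u))]
    _ = α j * L * A / M * ‖x - y‖ := by rw [hC]; field_simp
end
end

section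
/- Assume: (i) the rescaled kernel K_H is Lipschitz continuous on Ω with constant L and satisfies 0 < a ≤ K_H(x − u) ≤ A for all x, u ∈ Ω; (ii) the initial densities satisfy max_{1≤j≤m} ∫_Ω |log f_j⁰(u)| du = B < ∞; (iii) the initial weights satisfy λ_j⁰ ≥ λ > 0 for all j. Let (f^t, λ^t), t = 0, 1, 2, …, be the sequence generated by the algorithm, i.e., λ_j^{t+1} = ∫_Ω g(x) w_j^t(x) dx with w_j^t(x) = λ_j^t (N f_j^t)(x) / (M_{λ^t} N f^t)(x), and f_j^{t+1}(x) = α_j^{t+1} ∫_Ω K_H(x − u) g(u) (N f_j^t)(u) / (M_{λ^{t+1}} N f^t)(u) du with α_j^{t+1} the normalizing constant. Then for each j = 1,…,m the sequence of functions {f_j^t}_{t≥0} has a subsequence converging uniformly on Ω. -/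
/-!
The weights `λ^t` stay nonnegative, so every iterate `f_j^{t+1} = α (S h)` is a normalised
smoothing of a nonnegative function `h`. The bounds `a ≤ K_H ≤ A` on `Ω` squeeze `S h` between
`a ∫ h` and `A ∫ h`, and `∫_Ω f_j^{t+1} = 1` then forces `α ∫ h ≤ (a |Ω|)⁻¹`. Hence the iterates
are uniformly bounded by `A / (a |Ω|)` and, `K_H` being `L`-Lipschitz, uniformly
`L / (a |Ω|)`-Lipschitz; Arzelà–Ascoli on the compact set `Ω` gives the subsequence.
-/

open MeasureTheory Filter

noncomputable section

variable {d m : ℕ}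

open Set
open scoped NNReal

theorem exists_tendstoUniformlyOn_subseq_of_lipschitzOnWith {X Y : Type*} [PseudoMetricSpace X]
    [MetricSpace Y] {s : Set X} (hs : IsCompact s) {k : Set Y} (hk : IsCompact k)
    {F : ℕ → X → Y} {K : ℝ≥0} (hFk : ∀ n, ∀ x ∈ s, F n x ∈ k)
    (hF : ∀ n, LipschitzOnWith K (F n) s) :
    ∃ (ψ : X → Y) (φ : ℕ → ℕ), StrictMono φ ∧
      TendstoUniformlyOn (fun l => F (φ l)) ψ atTop s := by
  have : CompactSpace s := isCompact_iff_compactSpace.mp hs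
  let G : ℕ → BoundedContinuousFunction s Y := fun n =>
    .mkOfCompact ⟨fun x => F n x, (hF n).to_restrict.continuous⟩
  have hequi : Equicontinuous ((↑) : range G → s → Y) :=
    (LipschitzWith.uniformEquicontinuous _ K
      (by rintro ⟨_, n, rfl⟩; exact (hF n).to_restrict)).equicontinuous
  have hcompact := BoundedContinuousFunction.arzela_ascoli k hk (range G)
    (by rintro _ x ⟨n, rfl⟩; exact hFk n x x.2) hequi
  obtain ⟨ψ, -, φ, hφ, hlim⟩ :=
    hcompact.isSeqCompact fun n => subset_closure (mem_range_self n)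
  refine ⟨Function.extend Subtype.val ψ (F 0), φ, hφ, ?_⟩
  rw [tendstoUniformlyOn_iff_tendstoUniformly_comp_coe,
    Function.extend_comp Subtype.val_injective]
  exact BoundedContinuousFunction.tendsto_iff_tendstoUniformly.mp hlim

section Smoothing

variable {Ω : Set (Euc d)} {KH p : Euc d → ℝ}

theorem integrableOn_of_integrableOn_kernel_mul (hΩm : MeasurableSet Ω) (hK : Measurable KH)
    {a : ℝ} (ha : 0 < a) {x : Euc d} (hKa : ∀ u ∈ Ω, a ≤ KH (x - u))
    (hint : IntegrableOn (fun u => KH (x - u) * p u) Ω) :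
    IntegrableOn p Ω := by
  have hbound : ∀ᵐ u ∂volume.restrict Ω, ‖(KH (x - u))⁻¹‖ ≤ a⁻¹ := by
    refine (ae_restrict_iff' hΩm).2 (Eventually.of_forall fun u hu => ?_)
    rw [norm_inv, Real.norm_of_nonneg (ha.le.trans (hKa u hu))]
    exact inv_anti₀ ha (hKa u hu)
  refine (hint.bdd_mul (hK.comp (measurable_const.sub measurable_id)).inv.aestronglyMeasurable
    hbound).congr ((ae_restrict_iff' hΩm).2 (Eventually.of_forall fun u hu => ?_))
  exact inv_mul_cancel_left₀ (ha.trans_le (hKa u hu)).ne' (p u)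

theorem dist_SOp_le {K : ℝ≥0} (hK : LipschitzWith K KH) (hp : IntegrableOn p Ω)
    (hint : ∀ x, IntegrableOn (fun u => KH (x - u) * p u) Ω) (x y : Euc d) :
    dist (SOp Ω KH p x) (SOp Ω KH p y) ≤ K * (∫ u in Ω, |p u|) * dist x y := by
  rw [dist_eq_norm, SOp, SOp, ← integral_sub (hint x) (hint y)]
  calc ‖∫ u in Ω, (KH (x - u) * p u - KH (y - u) * p u)‖
      ≤ ∫ u in Ω, (K : ℝ) * dist x y * |p u| := by
        refine norm_integral_le_of_norm_le (hp.abs.const_mul _) (Eventually.of_forall fun u => ?_)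
        rw [← sub_mul, norm_mul, Real.norm_eq_abs, Real.norm_eq_abs, ← Real.dist_eq,
          ← dist_sub_right x y u]
        exact mul_le_mul_of_nonneg_right (hK.dist_le_mul _ _) (abs_nonneg _)
    _ = K * (∫ u in Ω, |p u|) * dist x y := by rw [integral_const_mul]; ring

theorem mul_integral_le_SOp (hΩm : MeasurableSet Ω) (hp0 : ∀ u ∈ Ω, 0 ≤ p u)
    (hp : IntegrableOn p Ω) {x : Euc d} (hint : IntegrableOn (fun u => KH (x - u) * p u) Ω)
    {a : ℝ} (hKa : ∀ u ∈ Ω, a ≤ KH (x - u)) :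
    a * ∫ u in Ω, p u ≤ SOp Ω KH p x := by
  rw [SOp, ← integral_const_mul]
  exact setIntegral_mono_on (hp.const_mul a) hint hΩm fun u hu =>
    mul_le_mul_of_nonneg_right (hKa u hu) (hp0 u hu)

theorem SOp_le_mul_integral (hΩm : MeasurableSet Ω) (hp0 : ∀ u ∈ Ω, 0 ≤ p u)
    (hp : IntegrableOn p Ω) {x : Euc d} (hint : IntegrableOn (fun u => KH (x - u) * p u) Ω)
    {A : ℝ} (hKA : ∀ u ∈ Ω, KH (x - u) ≤ A) :
    SOp Ω KH p x ≤ A * ∫ u in Ω, p u := by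
  rw [SOp, ← integral_const_mul]
  exact setIntegral_mono_on hint (hp.const_mul A) hΩm fun u hu =>
    mul_le_mul_of_nonneg_right (hKA u hu) (hp0 u hu)

theorem mul_integral_mul_measureReal_le_one (hΩc : IsCompact Ω) (hΩm : MeasurableSet Ω)
    {a α : ℝ} (hα : 0 ≤ α) (hKa : ∀ x ∈ Ω, ∀ u ∈ Ω, a ≤ KH (x - u)) (hp0 : ∀ u ∈ Ω, 0 ≤ p u)
    (hp : IntegrableOn p Ω) (hint : ∀ x, IntegrableOn (fun u => KH (x - u) * p u) Ω)
    (hdens : ∫ x in Ω, α * SOp Ω KH p x = 1) :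
    α * (∫ u in Ω, p u) * (a * volume.real Ω) ≤ 1 := by
  have hfint : IntegrableOn (fun x => α * SOp Ω KH p x) Ω := by
    by_contra h
    rw [integral_undef h] at hdens
    exact zero_ne_one hdens
  calc α * (∫ u in Ω, p u) * (a * volume.real Ω) = ∫ _ in Ω, α * (a * ∫ u in Ω, p u) := by
        rw [setIntegral_const, smul_eq_mul]; ring
    _ ≤ ∫ x in Ω, α * SOp Ω KH p x :=
        setIntegral_mono_on (integrableOn_const hΩc.measure_lt_top.ne) hfint hΩm fun x hx =>
          mul_le_mul_of_nonneg_left (mul_integral_le_SOp hΩm hp0 hp (hint x) (hKa x hx)) hα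
    _ = 1 := hdens

theorem mem_Icc_and_lipschitzWith_of_setIntegral_smul_SOp_eq_one (hΩc : IsCompact Ω)
    (hΩm : MeasurableSet Ω) {K : ℝ≥0} (hK : LipschitzWith K KH) {a A α : ℝ} (ha : 0 < a)
    (hKa : ∀ x ∈ Ω, ∀ u ∈ Ω, a ≤ KH (x - u)) (hKA : ∀ x ∈ Ω, ∀ u ∈ Ω, KH (x - u) ≤ A)
    (hα : 0 ≤ α) (hp0 : ∀ u ∈ Ω, 0 ≤ p u) (hint : ∀ x, IntegrableOn (fun u => KH (x - u) * p u) Ω)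
    (hdens : ∫ x in Ω, α * SOp Ω KH p x = 1) :
    (∀ x ∈ Ω, α * SOp Ω KH p x ∈ Icc 0 (A * (a * volume.real Ω)⁻¹)) ∧
      LipschitzWith (K * (a * volume.real Ω)⁻¹).toNNReal (fun x => α * SOp Ω KH p x) := by
  have hμ : volume Ω ≠ 0 := fun h0 => by
    rw [Measure.restrict_eq_zero.mpr h0, integral_zero_measure] at hdens
    exact zero_ne_one hdens
  have hμ' : 0 < volume.real Ω := ENNReal.toReal_pos hμ hΩc.measure_lt_top.ne
  obtain ⟨x₀, hx₀⟩ := nonempty_of_measure_ne_zero hμ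
  have hA : 0 ≤ A := ha.le.trans ((hKa x₀ hx₀ x₀ hx₀).trans (hKA x₀ hx₀ x₀ hx₀))
  have hp := integrableOn_of_integrableOn_kernel_mul hΩm hK.continuous.measurable ha
    (hKa x₀ hx₀) (hint x₀)
  have hmass : α * ∫ u in Ω, p u ≤ (a * volume.real Ω)⁻¹ := by
    rw [← one_div, le_div_iff₀ (by positivity)]
    exact mul_integral_mul_measureReal_le_one hΩc hΩm hα hKa hp0 hp hint hdens
  have habs : ∫ u in Ω, |p u| = ∫ u in Ω, p u :=
    setIntegral_congr_fun hΩm fun u hu => abs_of_nonneg (hp0 u hu)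
  refine ⟨fun x hx => ⟨?_, ?_⟩, LipschitzWith.of_dist_le' fun x y => ?_⟩
  · exact mul_nonneg hα <| (mul_nonneg ha.le (setIntegral_nonneg hΩm hp0)).trans
      (mul_integral_le_SOp hΩm hp0 hp (hint x) (hKa x hx))
  · calc α * SOp Ω KH p x ≤ α * (A * ∫ u in Ω, p u) :=
          mul_le_mul_of_nonneg_left (SOp_le_mul_integral hΩm hp0 hp (hint x) (hKA x hx)) hα
      _ = A * (α * ∫ u in Ω, p u) := by ring
      _ ≤ A * (a * volume.real Ω)⁻¹ := mul_le_mul_of_nonneg_left hmass hA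
  · rw [Real.dist_eq, ← mul_sub, abs_mul, abs_of_nonneg hα, ← Real.dist_eq]
    calc α * dist (SOp Ω KH p x) (SOp Ω KH p y) ≤ α * (K * (∫ u in Ω, |p u|) * dist x y) :=
          mul_le_mul_of_nonneg_left (dist_SOp_le hK hp hint x y) hα
      _ = K * (α * ∫ u in Ω, p u) * dist x y := by rw [habs]; ring
      _ ≤ K * (a * volume.real Ω)⁻¹ * dist x y := by gcongr

end Smoothing

section Algorithm

variable {Ω : Set (Euc d)} {KH : Euc d → ℝ} {lam : Fin m → ℝ}

theorem NOp_pos (f : Euc d → ℝ) (x : Euc d) : 0 < NOp Ω KH f x := Real.exp_pos _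

theorem MOp_nonneg (hlam : ∀ i, 0 ≤ lam i) (f : Fin m → Euc d → ℝ) (x : Euc d) :
    0 ≤ MOp Ω KH lam f x :=
  Finset.sum_nonneg fun i _ => mul_nonneg (hlam i) (NOp_pos _ _).le

theorem wFun_nonneg (hlam : ∀ i, 0 ≤ lam i) (f : Fin m → Euc d → ℝ) (j : Fin m) (x : Euc d) :
    0 ≤ wFun Ω KH lam f j x :=
  div_nonneg (mul_nonneg (hlam j) (NOp_pos _ _).le) (MOp_nonneg hlam f x)

theorem weights_nonneg {g : Euc d → ℝ} (hg : ∀ x, 0 ≤ g x) {lamSeq : ℕ → Fin m → ℝ}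
    {fSeq : ℕ → Fin m → Euc d → ℝ} (h0 : ∀ i, 0 ≤ lamSeq 0 i)
    (hrec : ∀ t i, lamSeq (t + 1) i = ∫ x in Ω, g x * wFun Ω KH (lamSeq t) (fSeq t) i x)
    (t : ℕ) (i : Fin m) : 0 ≤ lamSeq t i := by
  induction t generalizing i with
  | zero => exact h0 i
  | succ t ih =>
    rw [hrec]
    exact integral_nonneg fun x => mul_nonneg (hg x) (wFun_nonneg ih _ i x)

end Algorithm

theorem exists_uniformly_convergent_subsequence_general
    (Ω : Set (Euc d)) (hΩc : IsCompact Ω) (hΩm : MeasurableSet Ω)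
    (KH : Euc d → ℝ)
    (L : ℝ) (hLip : ∀ x y : Euc d, |KH x - KH y| ≤ L * ‖x - y‖)
    (a A : ℝ) (ha : 0 < a)
    (hKa : ∀ x ∈ Ω, ∀ u ∈ Ω, a ≤ KH (x - u))
    (hKA : ∀ x ∈ Ω, ∀ u ∈ Ω, KH (x - u) ≤ A)
    (g : Euc d → ℝ) (hgnn : ∀ x, 0 ≤ g x)
    (lamSeq : ℕ → Fin m → ℝ) (fSeq : ℕ → Fin m → Euc d → ℝ) (αSeq : ℕ → Fin m → ℝ)
    (lamBar : ℝ) (hlamBar : 0 < lamBar) (hlamInit : ∀ j, lamBar ≤ lamSeq 0 j)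
    (hfdens : ∀ t j, ∫ x in Ω, fSeq t j x = 1)
    (hαpos : ∀ t j, 0 < αSeq t j)
    (hlamrec : ∀ t j, lamSeq (t + 1) j = ∫ x in Ω, g x * wFun Ω KH (lamSeq t) (fSeq t) j x)
    (hfrec : ∀ t j x, fSeq (t + 1) j x =
      αSeq (t + 1) j * ∫ u in Ω, KH (x - u) * g u * NOp Ω KH (fSeq t j) u /
        MOp Ω KH (lamSeq (t + 1)) (fSeq t) u)
    (hGint : ∀ t j x, IntegrableOn (fun u => KH (x - u) * g u * NOp Ω KH (fSeq t j) u /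
      MOp Ω KH (lamSeq (t + 1)) (fSeq t) u) Ω) :
    ∀ j, ∃ (ψ : Euc d → ℝ) (φ : ℕ → ℕ), StrictMono φ ∧
      TendstoUniformlyOn (fun l => fSeq (φ l) j) ψ atTop Ω := by
  intro j
  have hK : LipschitzWith L.toNNReal KH :=
    LipschitzWith.of_dist_le' fun x y => by rw [Real.dist_eq, dist_eq_norm]; exact hLip x y
  have hlam := weights_nonneg hgnn (fun i => hlamBar.le.trans (hlamInit i)) hlamrec
  have hbounds (t : ℕ) : (∀ x ∈ Ω, fSeq (t + 1) j x ∈ Icc 0 (A * (a * volume.real Ω)⁻¹)) ∧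
      LipschitzWith (L.toNNReal * (a * volume.real Ω)⁻¹).toNNReal (fSeq (t + 1) j) := by
    have hrec : fSeq (t + 1) j = fun x => αSeq (t + 1) j * SOp Ω KH (fun u =>
        g u * NOp Ω KH (fSeq t j) u / MOp Ω KH (lamSeq (t + 1)) (fSeq t) u) x := by
      funext x
      simp only [hfrec, SOp, mul_div_assoc, mul_assoc]
    have hdens := hfdens (t + 1) j
    rw [hrec] at hdens ⊢
    refine mem_Icc_and_lipschitzWith_of_setIntegral_smul_SOp_eq_one hΩc hΩm hK ha hKa hKA
      (hαpos _ _).le (fun u _ => div_nonneg (mul_nonneg (hgnn u) (NOp_pos _ _).le)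
        (MOp_nonneg (hlam _) _ u)) (fun x => ?_) hdens
    simpa only [mul_div_assoc, mul_assoc] using hGint t j x
  obtain ⟨ψ, φ, hφ, hconv⟩ := exists_tendstoUniformlyOn_subseq_of_lipschitzOnWith hΩc isCompact_Icc
    (fun t => (hbounds t).1) (fun t => (hbounds t).2.lipschitzOnWith)
  exact ⟨ψ, fun l => φ l + 1, fun _ _ h => Nat.succ_lt_succ (hφ h), hconv⟩

/-- under the Lipschitz and boundedness assumptions on the kernel and the
stated assumptions on the initial point, for each `j` the sequence `{f_j^t}` generated by
the algorithm has a uniformly convergent subsequence on `Ω` (Arzelà–Ascoli). -/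
theorem exists_uniformly_convergent_subsequence
    (Ω : Set (Euc d)) (hΩc : IsCompact Ω) (hΩm : MeasurableSet Ω)
    (KH : Euc d → ℝ) (hKmeas : Measurable KH) (hKnn : ∀ u, 0 ≤ KH u)
    (hKint : ∫ u, KH u = 1)
    (L : ℝ) (hL : 0 < L) (hLip : ∀ x y : Euc d, |KH x - KH y| ≤ L * ‖x - y‖)
    (a A : ℝ) (ha : 0 < a)
    (hKa : ∀ x ∈ Ω, ∀ u ∈ Ω, a ≤ KH (x - u))
    (hKA : ∀ x ∈ Ω, ∀ u ∈ Ω, KH (x - u) ≤ A)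
    (g : Euc d → ℝ) (hgmeas : Measurable g) (hgnn : ∀ x, 0 ≤ g x)
    (hgdens : ∫ x in Ω, g x = 1)
    (lamSeq : ℕ → Fin m → ℝ) (fSeq : ℕ → Fin m → Euc d → ℝ) (αSeq : ℕ → Fin m → ℝ)
    (B : ℝ) (hB : ∀ j, ∫ u in Ω, |Real.log (fSeq 0 j u)| ≤ B)
    (lamBar : ℝ) (hlamBar : 0 < lamBar) (hlamInit : ∀ j, lamBar ≤ lamSeq 0 j)
    (hlamSum0 : ∑ j, lamSeq 0 j = 1)
    (hfmeas : ∀ t j, Measurable (fSeq t j))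
    (hfpos0 : ∀ j x, 0 < fSeq 0 j x)
    (hfdens : ∀ t j, ∫ x in Ω, fSeq t j x = 1)
    (hflog : ∀ t j, IntegrableOn (fun u => Real.log (fSeq t j u)) Ω)
    (hαpos : ∀ t j, 0 < αSeq t j)
    (hlamrec : ∀ t j, lamSeq (t + 1) j = ∫ x in Ω, g x * wFun Ω KH (lamSeq t) (fSeq t) j x)
    (hfrec : ∀ t j x, fSeq (t + 1) j x =
      αSeq (t + 1) j * ∫ u in Ω, KH (x - u) * g u * NOp Ω KH (fSeq t j) u /
        MOp Ω KH (lamSeq (t + 1)) (fSeq t) u)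
    (hwint : ∀ t j, IntegrableOn (fun x => g x * wFun Ω KH (lamSeq t) (fSeq t) j x) Ω)
    (hGint : ∀ t j x, IntegrableOn (fun u => KH (x - u) * g u * NOp Ω KH (fSeq t j) u /
      MOp Ω KH (lamSeq (t + 1)) (fSeq t) u) Ω) :
    ∀ j, ∃ (ψ : Euc d → ℝ) (φ : ℕ → ℕ), StrictMono φ ∧
      TendstoUniformlyOn (fun l => fSeq (φ l) j) ψ atTop Ω :=
  exists_uniformly_convergent_subsequence_general Ω hΩc hΩm KH L hLip a A ha hKa hKA g hgnn lamSeq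
    fSeq αSeq lamBar hlamBar hlamInit hfdens hαpos hlamrec hfrec hGint
end
end
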